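/- Let 𝒜 = {a,b} and for n ≥ 1 let v_n = (ab)^n and w_n = a^n b^n. Then v_n and w_n are related positive words and d_cbi(v_n, w_n) = ⌊n/2⌋; equivalently, cl_{F(a,b)}(a^n b^n + (ab)^{-n}) = ⌊n/2⌋ in the free group on {a,b}. -/

import Mathlib

open scoped commutatorElement in
/-- The commutator length of `g`: the least `k` such that `g` is a product of
`k` commutators (and `0` if no such `k` exists, e.g. `cl` of the identity is `0`). -/
noncomputable def cl (G : Type*) [Group G] (g : G) : ℕ :=
  sInf {k | ∃ l : List (G × G), l.length = k ∧ (l.map fun p => ⁅p.1, p.2⁆).prod = g}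

/-- The commutator length of a chain `g₁ + ⋯ + gₙ`, encoded as a list:
the minimum of `cl` over all products of conjugates `t₁g₁t₁⁻¹ ⋯ tₙgₙtₙ⁻¹`. -/
noncomputable def clChain (G : Type*) [Group G] (c : List G) : ℕ :=
  sInf {m | ∃ t : List G, t.length = c.length ∧
    m = cl G (List.zipWith (fun a b => a * b * a⁻¹) t c).prod}

/-- Two positive words are related if they contain the same number of each letter. -/
def Related {A : Type*} [DecidableEq A] (v w : List A) : Prop :=
  ∀ a : A, v.count a = w.count a

/-- `w` is a cyclic block interchange of `v`. -/
def IsCBI {A : Type*} (v w : List A) : Prop :=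
  ∃ v' w' : List A, List.IsRotated v' v ∧ List.IsRotated w' w ∧
    ∃ w1 w2 w3 w4 : List A, v' = w1 ++ w2 ++ w3 ++ w4 ∧ w' = w1 ++ w4 ++ w3 ++ w2

open Classical in
/-- The cyclic block interchange distance between two related words. -/
noncomputable def dcbi {A : Type*} (v w : List A) : ℕ :=
  if List.IsRotated v w then 0
  else sInf {k | ∃ z : ℕ → List A, z 0 = v ∧ z k = w ∧ ∀ i < k, IsCBI (z i) (z (i + 1))}

/-- A positive word regarded as an element of the free group. -/
def toFree {A : Type*} (v : List A) : FreeGroup A := (v.map FreeGroup.of).prod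

/-- The two-letter alphabet `𝒜 = {a,b}`. -/
inductive AB where
  | a | b
deriving DecidableEq

/-- The word `vₙ = (ab)ⁿ`. -/
def vAB (n : ℕ) : List AB := (List.replicate n [AB.a, AB.b]).flatten

/-- The word `wₙ = aⁿbⁿ`. -/
def wAB (n : ℕ) : List AB := List.replicate n AB.a ++ List.replicate n AB.b

/-!
Upper bounds: transposing two letters of `aᵏbᵏ(ab)ᵐ` is a cyclic block interchange which, up to
rotation, yields `aᵏ⁺²bᵏ⁺²(ab)ᵐ⁻²` (or `aᵏ⁺¹bᵏ⁺¹` when `m = 1`), so `⌊n/2⌋` interchanges turn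
`(ab)ⁿ` into `aⁿbⁿ`. In the free group an interchange multiplies by a commutator up to conjugation,
which bounds the commutator length of the chain.

Lower bound for `d_cbi`: an interchange changes the number of cyclic letter changes of a word by at
most `4`, and this number is `2n` for `(ab)ⁿ` and `2` for `aⁿbⁿ`.

Lower bound for `cl`: send `a, b` to lifts `A, B` of circle homeomorphisms with `A 0 = 0`,
`B (1/2) = 1/2` and `τ(AB) ≤ -1`, where `τ` is the translation number. A commutator moves every
point by less than `2`, so if `t₀ wₙ t₀⁻¹ = P · t₁ vₙ t₁⁻¹` with `P` a product of `k` commutators,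
then `-1 ≤ τ(AⁿBⁿ) ≤ τ((AB)ⁿ) + 2k ≤ 2k - n`.
-/

open scoped commutatorElement

section CommutatorProducts

variable {G H : Type*} [Group G] [Group H]

abbrev commutatorProd (l : List (G × G)) : G := (l.map fun p => ⁅p.1, p.2⁆).prod

theorem map_commutatorProd (φ : G →* H) (l : List (G × G)) :
    φ (commutatorProd l) = commutatorProd (l.map (Prod.map φ φ)) := by
  simp only [commutatorProd, map_list_prod, List.map_map]
  congr 1
  exact List.map_congr_left fun p _ => map_commutatorElement φ p.1 p.2

theorem conj_commutatorProd (c : G) (l : List (G × G)) :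
    c * commutatorProd l * c⁻¹ =
      commutatorProd (l.map (Prod.map (MulAut.conj c) (MulAut.conj c))) := by
  simpa using map_commutatorProd (MulAut.conj c).toMonoidHom l

theorem cl_le_length {g : G} {l : List (G × G)} (hl : commutatorProd l = g) :
    cl G g ≤ l.length :=
  Nat.sInf_le ⟨l, rfl, hl⟩

theorem le_cl {g : G} {m : ℕ} (hg : ∃ l : List (G × G), commutatorProd l = g)
    (hm : ∀ l : List (G × G), commutatorProd l = g → m ≤ l.length) : m ≤ cl G g := by
  obtain ⟨l, hl⟩ := hg
  exact le_csInf ⟨_, l, rfl, hl⟩ fun _ ⟨l', hlen, hl'⟩ => hlen ▸ hm l' hl'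

theorem clChain_pair_le (g h t₀ t₁ : G) :
    clChain G [g, h] ≤ cl G (t₀ * g * t₀⁻¹ * (t₁ * h * t₁⁻¹)) :=
  Nat.sInf_le ⟨[t₀, t₁], rfl, by simp⟩

theorem le_clChain_pair {g h : G} {m : ℕ}
    (hm : ∀ t₀ t₁ : G, m ≤ cl G (t₀ * g * t₀⁻¹ * (t₁ * h * t₁⁻¹))) : m ≤ clChain G [g, h] := by
  refine le_csInf ⟨_, [1, 1], rfl, rfl⟩ ?_
  rintro _ ⟨t, ht, rfl⟩
  obtain ⟨t₀, t₁, rfl⟩ := List.length_eq_two.mp ht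
  simpa using hm t₀ t₁

theorem exists_commutatorProd_conj_mul_conj {g h s : G} {l : List (G × G)}
    (hl : commutatorProd l = g * (s * h * s⁻¹)) (t₀ t₁ : G) :
    ∃ l' : List (G × G), commutatorProd l' = t₀ * g * t₀⁻¹ * (t₁ * h * t₁⁻¹) := by
  refine ⟨l.map (Prod.map (MulAut.conj t₀) (MulAut.conj t₀)) ++
    [(t₀ * s * h⁻¹ * (t₀ * s)⁻¹, t₁ * (t₀ * s)⁻¹)], ?_⟩
  rw [commutatorProd, List.map_append, List.prod_append, ← commutatorProd,
    ← conj_commutatorProd, hl]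
  simp only [List.map_cons, List.map_nil, List.prod_cons, List.prod_nil, commutatorElement_def]
  group

theorem mul_mul_mul_swap_eq_commutator_mul (a₁ a₂ a₃ a₄ : G) :
    a₁ * a₄ * a₃ * a₂ =
      ⁅a₁ * (a₄ * a₃) * a₁⁻¹, a₁ * (a₂ * a₄⁻¹) * a₁⁻¹⁆ * (a₁ * a₂ * a₃ * a₄) := by
  rw [commutatorElement_def]
  group

end CommutatorProducts

section CyclicBlockInterchange

variable {A : Type*}

def IsCBIPath (v w : List A) (k : ℕ) : Prop :=
  ∃ z : ℕ → List A, z 0 = v ∧ z k = w ∧ ∀ i < k, IsCBI (z i) (z (i + 1))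

theorem isCBIPath_zero_iff {v w : List A} : IsCBIPath v w 0 ↔ v = w :=
  ⟨fun ⟨_, h0, hk, _⟩ => h0 ▸ hk, fun h => ⟨fun _ => v, rfl, h, by simp⟩⟩

theorem isCBIPath_succ_iff {v w : List A} {k : ℕ} :
    IsCBIPath v w (k + 1) ↔ ∃ x, IsCBIPath v x k ∧ IsCBI x w := by
  constructor
  · rintro ⟨z, h0, hk, hz⟩
    exact ⟨z k, ⟨z, h0, rfl, fun i hi => hz i (by omega)⟩, hk ▸ hz k (by omega)⟩
  · rintro ⟨x, ⟨z, h0, hk, hz⟩, hxw⟩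
    refine ⟨fun i => if i ≤ k then z i else w, by simpa using h0, by simp, fun i hi => ?_⟩
    rcases Nat.lt_succ_iff_lt_or_eq.mp hi with hi | rfl
    · simpa [hi.le, Nat.succ_le_of_lt hi] using hz i hi
    · simpa [hk] using hxw

theorem dcbi_le {v w : List A} {k : ℕ} (h : IsCBIPath v w k) : dcbi v w ≤ k := by
  unfold dcbi
  split_ifs
  · exact Nat.zero_le k
  · exact Nat.sInf_le h

theorem toFree_append (x y : List A) : toFree (x ++ y) = toFree x * toFree y := by
  simp [toFree]

theorem isConj_toFree_of_isRotated {l m : List A} (h : l ~r m) :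
    IsConj (toFree l) (toFree m) := by
  obtain ⟨n, rfl⟩ := h
  have hl : toFree l = toFree (l.take (n % l.length)) * toFree (l.drop (n % l.length)) := by
    rw [← toFree_append, List.take_append_drop]
  rw [List.rotate_eq_drop_append_take_mod, toFree_append, hl, isConj_iff]
  exact ⟨(toFree (l.take (n % l.length)))⁻¹, by group⟩

theorem exists_toFree_eq_commutator_mul_conj {x y : List A} (h : IsCBI x y) :
    ∃ p q u : FreeGroup A, toFree y = ⁅p, q⁆ * (u * toFree x * u⁻¹) := by
  obtain ⟨v', w', hv, hw, w₁, w₂, w₃, w₄, rfl, rfl⟩ := h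
  obtain ⟨c, hc⟩ := isConj_iff.mp (isConj_toFree_of_isRotated hv)
  obtain ⟨d, hd⟩ := isConj_iff.mp (isConj_toFree_of_isRotated hw)
  simp only [toFree_append] at hc hd
  set a₁ := toFree w₁
  set a₂ := toFree w₂
  set a₄ := toFree w₄
  refine ⟨d * (a₁ * (a₄ * toFree w₃) * a₁⁻¹) * d⁻¹, d * (a₁ * (a₂ * a₄⁻¹) * a₁⁻¹) * d⁻¹,
    d * c⁻¹, ?_⟩
  rw [← hd, ← hc, mul_mul_mul_swap_eq_commutator_mul, commutatorElement_def,
    commutatorElement_def]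
  group

theorem exists_commutatorProd_of_isCBIPath {v w : List A} {k : ℕ} (h : IsCBIPath v w k) :
    ∃ (s : FreeGroup A) (l : List (FreeGroup A × FreeGroup A)),
      l.length = k ∧ commutatorProd l = toFree w * (s * (toFree v)⁻¹ * s⁻¹) := by
  induction k generalizing w with
  | zero => exact ⟨1, [], rfl, by simp [commutatorProd, isCBIPath_zero_iff.mp h]⟩
  | succ k ih =>
    obtain ⟨x, hvx, hxw⟩ := isCBIPath_succ_iff.mp h
    obtain ⟨s, l, hlen, hl⟩ := ih hvx
    obtain ⟨p, q, u, hw⟩ := exists_toFree_eq_commutator_mul_conj hxw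
    refine ⟨u * s, (p, q) :: l.map (Prod.map (MulAut.conj u) (MulAut.conj u)), by simp [hlen], ?_⟩
    rw [commutatorProd, List.map_cons, List.prod_cons, ← commutatorProd, ← conj_commutatorProd,
      hl, hw]
    group

end CyclicBlockInterchange

section ChangeCount

variable {A : Type*} [DecidableEq A]

def boundaryChange : Option A → Option A → ℕ
  | some x, some y => if x = y then 0 else 1
  | _, _ => 0

def changeCount : List A → ℕ
  | [] => 0
  | x :: t => boundaryChange (some x) t.head? + changeCount t

def cyclicChangeCount (l : List A) : ℕ := changeCount l + boundaryChange l.getLast? l.head?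

theorem boundaryChange_le_one (x y : Option A) : boundaryChange x y ≤ 1 := by
  unfold boundaryChange
  split <;> [split_ifs <;> omega; omega]

theorem changeCount_append (x y : List A) :
    changeCount (x ++ y) = changeCount x + changeCount y + boundaryChange x.getLast? y.head? := by
  induction x with
  | nil => simp [changeCount, boundaryChange]
  | cons a t ih =>
    rw [List.cons_append, changeCount, changeCount, ih]
    cases t with
    | nil => cases y <;> simp [changeCount, boundaryChange, add_comm]
    | cons b t => simp only [List.cons_append, List.head?_cons, List.getLast?_cons_cons]; omega

theorem changeCount_replicate (n : ℕ) (a : A) : changeCount (List.replicate n a) = 0 := by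
  induction n with
  | zero => rfl
  | succ n ih => cases n <;> simp_all [List.replicate_succ, changeCount, boundaryChange]

theorem cyclicChangeCount_append_comm (x y : List A) :
    cyclicChangeCount (x ++ y) = cyclicChangeCount (y ++ x) := by
  rcases eq_or_ne x [] with rfl | hx
  · simp
  rcases eq_or_ne y [] with rfl | hy
  · simp
  simp only [cyclicChangeCount, changeCount_append, List.head?_append_of_ne_nil _ hx,
    List.head?_append_of_ne_nil _ hy, List.getLast?_append_of_ne_nil _ hx,
    List.getLast?_append_of_ne_nil _ hy]
  omega

theorem cyclicChangeCount_eq_of_isRotated {l m : List A} (h : l ~r m) :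
    cyclicChangeCount l = cyclicChangeCount m := by
  obtain ⟨n, rfl⟩ := h
  rw [List.rotate_eq_drop_append_take_mod, ← cyclicChangeCount_append_comm,
    List.take_append_drop]

theorem cyclicChangeCount_le_of_isCBI {x y : List A} (h : IsCBI x y) :
    cyclicChangeCount x ≤ cyclicChangeCount y + 4 := by
  obtain ⟨v', w', hv, hw, w₁, w₂, w₃, w₄, rfl, rfl⟩ := h
  rw [← cyclicChangeCount_eq_of_isRotated hv, ← cyclicChangeCount_eq_of_isRotated hw]
  simp only [cyclicChangeCount, changeCount_append]
  have := boundaryChange_le_one (w₁ ++ w₂ ++ w₃).getLast? w₄.head?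
  have := boundaryChange_le_one (w₁ ++ w₂).getLast? w₃.head?
  have := boundaryChange_le_one w₁.getLast? w₂.head?
  have := boundaryChange_le_one (w₁ ++ w₂ ++ w₃ ++ w₄).getLast? (w₁ ++ w₂ ++ w₃ ++ w₄).head?
  omega

theorem cyclicChangeCount_le_of_isCBIPath {v w : List A} {k : ℕ} (h : IsCBIPath v w k) :
    cyclicChangeCount v ≤ cyclicChangeCount w + 4 * k := by
  induction k generalizing w with
  | zero => simp [isCBIPath_zero_iff.mp h]
  | succ k ih =>
    obtain ⟨x, hvx, hxw⟩ := isCBIPath_succ_iff.mp h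
    have := ih hvx
    have := cyclicChangeCount_le_of_isCBI hxw
    omega

theorem cyclicChangeCount_le_add_four_mul_dcbi {v w : List A} {k : ℕ} (h : IsCBIPath v w k) :
    cyclicChangeCount v ≤ cyclicChangeCount w + 4 * dcbi v w := by
  unfold dcbi
  split_ifs with hrot
  · simp [cyclicChangeCount_eq_of_isRotated hrot]
  · exact cyclicChangeCount_le_of_isCBIPath (Nat.sInf_mem (s := {j | IsCBIPath v w j}) ⟨k, h⟩)

theorem cyclicChangeCount_append_of_head?_eq {x y : List A} (h : x.head? = y.head?) :
    cyclicChangeCount (x ++ y) = cyclicChangeCount x + cyclicChangeCount y := by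
  rcases eq_or_ne y [] with rfl | hy
  · simp [cyclicChangeCount, changeCount, boundaryChange]
  have hx : x ≠ [] := by rintro rfl; simp [eq_comm, hy] at h
  simp only [cyclicChangeCount, changeCount_append, List.head?_append_of_ne_nil _ hx,
    List.getLast?_append_of_ne_nil _ hy, h]
  omega

end ChangeCount

section Words

open AB

theorem vAB_succ (n : ℕ) : vAB (n + 1) = [a, b] ++ vAB n := rfl

theorem vAB_succ' (n : ℕ) : vAB (n + 1) = vAB n ++ [a, b] := by
  simp [vAB, List.replicate_succ']

theorem related_vAB_wAB (n : ℕ) : Related (vAB n) (wAB n) := by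
  intro c
  cases c <;> simp [vAB, wAB, List.count_flatten, List.count_replicate]

def sortedAB (k m : ℕ) : List AB := List.replicate k a ++ List.replicate k b ++ vAB m

theorem isCBI_sortedAB_add_two (k m : ℕ) : IsCBI (sortedAB k (m + 2)) (sortedAB (k + 2) m) := by
  refine ⟨_, _, List.IsRotated.refl _, List.isRotated_append (l' := [a, a]),
    List.replicate k a ++ List.replicate k b, [a], b :: vAB m ++ [a], [b], ?_, ?_⟩
  · rw [sortedAB, vAB_succ, vAB_succ']
    simp
  · simp [List.replicate_succ']

theorem isCBI_sortedAB_one (k : ℕ) : IsCBI (sortedAB k 1) (sortedAB (k + 1) 0) := by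
  refine ⟨_, _, List.IsRotated.refl _, List.isRotated_append (l' := [a]),
    List.replicate k a ++ List.replicate k b, [a], [], [b], ?_, ?_⟩ <;>
  simp [sortedAB, vAB, List.replicate_succ']

theorem isCBIPath_sortedAB (k m j : ℕ) :
    IsCBIPath (sortedAB k (m + 2 * j)) (sortedAB (k + 2 * j) m) j := by
  induction j generalizing m with
  | zero => exact isCBIPath_zero_iff.mpr rfl
  | succ j ih =>
    refine isCBIPath_succ_iff.mpr ⟨_, ?_, isCBI_sortedAB_add_two (k + 2 * j) m⟩
    simpa [Nat.mul_succ, add_assoc, add_comm 2] using ih (m + 2)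

theorem isCBIPath_vAB_wAB {n : ℕ} (hn : 1 ≤ n) : IsCBIPath (vAB n) (wAB n) (n / 2) := by
  have hv : vAB n = sortedAB 1 (n - 1) := by
    obtain ⟨m, rfl⟩ := Nat.exists_eq_add_of_le' hn
    rfl
  have hw : wAB n = sortedAB n 0 := by simp [sortedAB, wAB, vAB]
  rw [hv, hw]
  obtain ⟨j, rfl | rfl⟩ := Nat.even_or_odd' n
  · obtain ⟨i, rfl⟩ := Nat.exists_eq_add_of_le' (show 1 ≤ j by omega)
    rw [show 2 * (i + 1) / 2 = i + 1 by omega, show 2 * (i + 1) = 1 + 2 * i + 1 by omega]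
    exact isCBIPath_succ_iff.mpr ⟨_, isCBIPath_sortedAB 1 1 i, isCBI_sortedAB_one (1 + 2 * i)⟩
  · convert isCBIPath_sortedAB 1 0 j using 2 <;> omega

theorem cyclicChangeCount_vAB (n : ℕ) : cyclicChangeCount (vAB n) = 2 * n := by
  induction n with
  | zero => rfl
  | succ n ih =>
    cases n with
    | zero => rfl
    | succ n =>
      rw [vAB_succ, cyclicChangeCount_append_of_head?_eq (x := [a, b]) (y := vAB (n + 1)) rfl, ih,
        show cyclicChangeCount [a, b] = 2 by decide]
      ring

theorem cyclicChangeCount_wAB {n : ℕ} (hn : 1 ≤ n) : cyclicChangeCount (wAB n) = 2 := by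
  obtain ⟨m, rfl⟩ := Nat.exists_eq_add_of_le' hn
  simp [wAB, cyclicChangeCount, changeCount_append, changeCount_replicate, boundaryChange,
    List.getLast?_append, List.head?_append, List.getLast?_replicate, List.head?_replicate]

theorem toFree_vAB (n : ℕ) : toFree (vAB n) = (FreeGroup.of a * FreeGroup.of b) ^ n := by
  simp [toFree, vAB, List.map_flatten, List.prod_flatten]

theorem toFree_wAB (n : ℕ) : toFree (wAB n) = FreeGroup.of a ^ n * FreeGroup.of b ^ n := by
  simp [toFree, wAB]

end Words

section CircleLifts

open CircleDeg1Lift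

theorem translationNumber_conj_units (u f : CircleDeg1Liftˣ) :
    translationNumber ((u * f * u⁻¹ : CircleDeg1Liftˣ) : CircleDeg1Lift) =
      translationNumber (f : CircleDeg1Lift) := by
  rw [Units.val_mul, Units.val_mul, translationNumber_conj_eq]

-- `⁅f, g⁆ = (fg)(gf)⁻¹` and `fg`, `gf` are conjugate, so each factor moves `x` by at most its
-- translation number plus `1`, and the translation numbers cancel.
theorem commutator_apply_lt (f g : CircleDeg1Liftˣ) (x : ℝ) :
    (⁅f, g⁆ : CircleDeg1Liftˣ) x < x + 2 := by
  have hconj : translationNumber ((g * f : CircleDeg1Liftˣ) : CircleDeg1Lift) =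
      translationNumber ((f * g : CircleDeg1Liftˣ) : CircleDeg1Lift) := by
    rw [show g * f = f⁻¹ * (f * g) * f⁻¹⁻¹ by group, translationNumber_conj_units]
  have hinv := translationNumber_units_inv (g * f)
  have h₁ := map_lt_add_translationNumber_add_one ((f * g : CircleDeg1Liftˣ) : CircleDeg1Lift)
    (((g * f)⁻¹ : CircleDeg1Liftˣ) x)
  have h₂ :=
    map_lt_add_translationNumber_add_one (((g * f)⁻¹ : CircleDeg1Liftˣ) : CircleDeg1Lift) x
  rw [show ⁅f, g⁆ = f * g * (g * f)⁻¹ by rw [commutatorElement_def]; group]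
  change ((f * g : CircleDeg1Liftˣ) : CircleDeg1Lift) (((g * f)⁻¹ : CircleDeg1Liftˣ) x) < x + 2
  linarith

theorem commutatorProd_apply_le (l : List (CircleDeg1Liftˣ × CircleDeg1Liftˣ)) (x : ℝ) :
    (commutatorProd l : CircleDeg1Liftˣ) x ≤ x + 2 * l.length := by
  induction l with
  | nil => simp [commutatorProd]
  | cons p l ih =>
    have := commutator_apply_lt p.1 p.2 ((commutatorProd l : CircleDeg1Liftˣ) x)
    change ((⁅p.1, p.2⁆ * commutatorProd l : CircleDeg1Liftˣ) : CircleDeg1Lift) x ≤ _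
    rw [Units.val_mul, mul_apply, List.length_cons, Nat.cast_succ]
    linarith

theorem translationNumber_mul_le_of_le_add_nat {f : CircleDeg1Lift} {m : ℕ}
    (hf : ∀ x, f x ≤ x + m) (g : CircleDeg1Lift) :
    translationNumber (f * g) ≤ m + translationNumber g := by
  set T : CircleDeg1Lift := translate (Multiplicative.ofAdd (m : ℝ))
  have hT : ∀ x, T x = m + x := translate_apply m
  have hcomm : Commute T g := by
    rw [commute_iff_commute, show ⇑T = ((m : ℝ) + ·) from funext hT]
    exact (g.commute_nat_add m).symm
  calc translationNumber (f * g) ≤ translationNumber (T * g) :=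
        translationNumber_mono fun x => by
          rw [mul_apply, mul_apply, hT, add_comm (m : ℝ)]
          exact hf (g x)
    _ = m + translationNumber g := by
      rw [translationNumber_mul_of_commute hcomm, translationNumber_translate]

theorem translationNumber_le_of_commutatorProd_eq {G : Type*} [Group G] (ρ : G →* CircleDeg1Liftˣ)
    {g h t₀ t₁ : G} {l : List (G × G)}
    (hl : commutatorProd l = t₀ * g * t₀⁻¹ * (t₁ * h⁻¹ * t₁⁻¹)) :
    translationNumber (ρ g : CircleDeg1Lift) ≤
      translationNumber (ρ h : CircleDeg1Lift) + 2 * l.length := by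
  set l' := l.map (Prod.map ρ ρ)
  have hρ : ρ t₀ * ρ g * (ρ t₀)⁻¹ = commutatorProd l' * (ρ t₁ * ρ h * (ρ t₁)⁻¹) := by
    rw [← map_commutatorProd, hl]
    simp only [map_mul, map_inv]
    group
  have hlen : ((2 * l'.length : ℕ) : ℝ) = 2 * l.length := by simp [l']
  calc translationNumber (ρ g : CircleDeg1Lift)
      = translationNumber ((ρ t₀ * ρ g * (ρ t₀)⁻¹ : CircleDeg1Liftˣ) : CircleDeg1Lift) :=
        (translationNumber_conj_units _ _).symm
    _ ≤ ((2 * l'.length : ℕ) : ℝ) +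
          translationNumber ((ρ t₁ * ρ h * (ρ t₁)⁻¹ : CircleDeg1Liftˣ) : CircleDeg1Lift) := by
        rw [hρ, Units.val_mul]
        exact translationNumber_mul_le_of_le_add_nat
          (fun x => by exact_mod_cast commutatorProd_apply_le l' x) _
    _ = translationNumber (ρ h : CircleDeg1Lift) + 2 * l.length := by
        rw [translationNumber_conj_units, hlen, add_comm]

end CircleLifts

section PeriodicLift

open CircleDeg1Lift Set

theorem OrderIso.mapsTo_Ico_zero_one {e : ℝ ≃o ℝ} (h₀ : e 0 = 0) (h₁ : e 1 = 1) :
    MapsTo e (Ico 0 1) (Ico 0 1) :=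
  fun _ hu => ⟨h₀ ▸ e.monotone hu.1, h₁ ▸ e.strictMono hu.2⟩

noncomputable def periodicLift (e : ℝ ≃o ℝ) (h₀ : e 0 = 0) (h₁ : e 1 = 1) : CircleDeg1Lift where
  toFun x := ⌊x⌋ + e (Int.fract x)
  monotone' x y hxy := by
    have hI := OrderIso.mapsTo_Ico_zero_one h₀ h₁
    rcases (Int.floor_mono hxy).lt_or_eq with hlt | heq
    · have hx := (hI ⟨Int.fract_nonneg x, Int.fract_lt_one x⟩).2
      have hy := (hI ⟨Int.fract_nonneg y, Int.fract_lt_one y⟩).1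
      have : (⌊x⌋ : ℝ) + 1 ≤ ⌊y⌋ := by exact_mod_cast hlt
      linarith
    · have : Int.fract x ≤ Int.fract y := by
        rw [Int.fract, Int.fract, heq]
        linarith
      dsimp only
      rw [heq]
      exact (add_le_add_iff_left _).mpr (e.monotone this)
  map_add_one' x := by
    simp only [Int.floor_add_one, Int.fract_add_one, Int.cast_add, Int.cast_one]
    ring

theorem periodicLift_intCast_add {e : ℝ ≃o ℝ} (h₀ : e 0 = 0) (h₁ : e 1 = 1) (m : ℤ) {u : ℝ}
    (hu : u ∈ Ico 0 1) : periodicLift e h₀ h₁ (m + u) = m + e u := by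
  change (⌊(m : ℝ) + u⌋ : ℝ) + e (Int.fract ((m : ℝ) + u)) = m + e u
  rw [Int.floor_intCast_add, Int.fract_intCast_add, Int.floor_eq_zero_iff.mpr hu,
    Int.fract_eq_self.mpr hu, add_zero]

theorem periodicLift_apply_periodicLift {e e' : ℝ ≃o ℝ} (h₀ : e 0 = 0) (h₁ : e 1 = 1)
    (h₀' : e' 0 = 0) (h₁' : e' 1 = 1) (he : ∀ u, e (e' u) = u) (x : ℝ) :
    periodicLift e h₀ h₁ (periodicLift e' h₀' h₁' x) = x := by
  change periodicLift e h₀ h₁ (⌊x⌋ + e' (Int.fract x)) = x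
  rw [periodicLift_intCast_add h₀ h₁ _ (OrderIso.mapsTo_Ico_zero_one h₀' h₁'
    ⟨Int.fract_nonneg x, Int.fract_lt_one x⟩), he, Int.floor_add_fract]

noncomputable def periodicLiftUnit (e : ℝ ≃o ℝ) (h₀ : e 0 = 0) (h₁ : e 1 = 1) :
    CircleDeg1Liftˣ where
  val := periodicLift e h₀ h₁
  inv := periodicLift e.symm (e.symm_apply_eq.mpr h₀.symm) (e.symm_apply_eq.mpr h₁.symm)
  val_inv := ext <| periodicLift_apply_periodicLift h₀ h₁ _ _ e.apply_symm_apply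
  inv_val := ext <| periodicLift_apply_periodicLift (e.symm_apply_eq.mpr h₀.symm)
    (e.symm_apply_eq.mpr h₁.symm) h₀ h₁ e.symm_apply_apply

theorem periodicLiftUnit_apply_of_mem_Ico {e : ℝ ≃o ℝ} (h₀ : e 0 = 0) (h₁ : e 1 = 1) {u : ℝ}
    (hu : u ∈ Ico 0 1) : periodicLiftUnit e h₀ h₁ u = e u := by
  simpa [periodicLiftUnit] using periodicLift_intCast_add h₀ h₁ 0 hu

end PeriodicLift

section CircleRepresentation

open CircleDeg1Lift Set

-- `kinkIso` squeezes `[0, 3/4]` onto `[0, 1/4]`; this is what makes `AB (1/4) = 1/4 - 1` below.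
noncomputable def kinkIso : ℝ ≃o ℝ :=
  StrictMono.orderIsoOfRightInverse (fun u => if u ≤ 3 / 4 then u / 3 else 3 * u - 2)
    (fun u v huv => by dsimp only; split_ifs <;> linarith)
    (fun u => if u ≤ 1 / 4 then 3 * u else (u + 2) / 3)
    (fun u => by dsimp only; split_ifs <;> linarith)

theorem kinkIso_apply (u : ℝ) : kinkIso u = if u ≤ 3 / 4 then u / 3 else 3 * u - 2 := rfl

noncomputable def liftA : CircleDeg1Liftˣ :=
  periodicLiftUnit kinkIso (by norm_num [kinkIso_apply]) (by norm_num [kinkIso_apply])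

noncomputable def liftB : CircleDeg1Liftˣ :=
  (translate (Multiplicative.ofAdd (1 / 2)))⁻¹ * liftA * translate (Multiplicative.ofAdd (1 / 2))

theorem liftA_apply_of_mem_Ico {u : ℝ} (hu : u ∈ Ico 0 1) : liftA u = kinkIso u :=
  periodicLiftUnit_apply_of_mem_Ico _ _ hu

theorem liftB_apply (x : ℝ) : liftB x = -(1 / 2) + liftA (1 / 2 + x) := by
  simp [liftB, Units.val_mul, mul_apply, translate_apply, translate_inv_apply]

theorem liftA_zero : liftA 0 = 0 := by
  rw [liftA_apply_of_mem_Ico (by norm_num), kinkIso_apply]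
  norm_num

theorem liftB_half : liftB (1 / 2) = 1 / 2 := by
  have : liftA 1 = 1 := by
    simpa [liftA_zero] using (liftA : CircleDeg1Lift).map_add_one 0
  rw [liftB_apply]
  norm_num [this]

theorem translationNumber_liftA_mul_liftB_le :
    translationNumber ((liftA * liftB : CircleDeg1Liftˣ) : CircleDeg1Lift) ≤ -1 := by
  have hB : liftB (1 / 4) = -(1 / 4) := by
    rw [liftB_apply, liftA_apply_of_mem_Ico (by norm_num), kinkIso_apply]
    norm_num
  have hA : liftA (-(1 / 4)) = -(3 / 4) := by
    rw [show -(1 / 4 : ℝ) = ((-1 : ℤ) : ℝ) + 3 / 4 by norm_num, map_int_add,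
      liftA_apply_of_mem_Ico (by norm_num), kinkIso_apply]
    norm_num
  have : ((liftA * liftB : CircleDeg1Liftˣ) : CircleDeg1Lift) (1 / 4) ≤ 1 / 4 + ((-1 : ℤ) : ℝ) := by
    rw [Units.val_mul, mul_apply, hB, hA]
    norm_num
  exact_mod_cast translationNumber_le_of_le_add_int _ this

theorem neg_one_le_translationNumber_liftA_pow_mul_liftB_pow (n : ℕ) :
    -1 ≤ translationNumber ((liftA ^ n * liftB ^ n : CircleDeg1Liftˣ) : CircleDeg1Lift) := by
  have hA : ((liftA ^ n : CircleDeg1Liftˣ) : CircleDeg1Lift) 0 = 0 := by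
    rw [Units.val_pow_eq_pow_val, coe_pow]
    exact Function.iterate_fixed liftA_zero n
  have hB : ((liftB ^ n : CircleDeg1Liftˣ) : CircleDeg1Lift) (1 / 2) = 1 / 2 := by
    rw [Units.val_pow_eq_pow_val, coe_pow]
    exact Function.iterate_fixed liftB_half n
  have : 1 / 2 + ((-1 : ℤ) : ℝ) ≤
      ((liftA ^ n * liftB ^ n : CircleDeg1Liftˣ) : CircleDeg1Lift) (1 / 2) := by
    have := ((liftA ^ n : CircleDeg1Liftˣ) : CircleDeg1Lift).monotone
      (show (0 : ℝ) ≤ 1 / 2 by norm_num)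
    rw [Units.val_mul, mul_apply, hB, Int.cast_neg, Int.cast_one]
    linarith
  exact_mod_cast le_translationNumber_of_add_int_le _ this

noncomputable def circleRep : FreeGroup AB →* CircleDeg1Liftˣ :=
  FreeGroup.lift fun
    | .a => liftA
    | .b => liftB

theorem translationNumber_circleRep_vAB_le (n : ℕ) :
    translationNumber (circleRep (toFree (vAB n)) : CircleDeg1Lift) ≤ -n := by
  rw [toFree_vAB, map_pow, Units.val_pow_eq_pow_val, translationNumber_pow, map_mul]
  have := translationNumber_liftA_mul_liftB_le
  simp only [circleRep, FreeGroup.lift_apply_of]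
  nlinarith [(n.cast_nonneg : (0 : ℝ) ≤ n)]

theorem neg_one_le_translationNumber_circleRep_wAB (n : ℕ) :
    -1 ≤ translationNumber (circleRep (toFree (wAB n)) : CircleDeg1Lift) := by
  rw [toFree_wAB, map_mul, map_pow, map_pow]
  exact neg_one_le_translationNumber_liftA_pow_mul_liftB_pow n

end CircleRepresentation

theorem le_two_mul_length_add_one_of_commutatorProd_eq {n : ℕ} {t₀ t₁ : FreeGroup AB}
    {l : List (FreeGroup AB × FreeGroup AB)}
    (hl : commutatorProd l = t₀ * toFree (wAB n) * t₀⁻¹ * (t₁ * (toFree (vAB n))⁻¹ * t₁⁻¹)) :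
    n ≤ 2 * l.length + 1 := by
  have := translationNumber_le_of_commutatorProd_eq circleRep hl
  have := translationNumber_circleRep_vAB_le n
  have := neg_one_le_translationNumber_circleRep_wAB n
  have : (n : ℝ) ≤ 2 * l.length + 1 := by linarith
  exact_mod_cast this

/-- For `n ≥ 1`, the words `vₙ = (ab)ⁿ` and `wₙ = aⁿbⁿ` are related and
`d_cbi(vₙ, wₙ) = ⌊n/2⌋`; equivalently, `cl_{F(a,b)}(aⁿbⁿ + (ab)⁻ⁿ) = ⌊n/2⌋`. -/
theorem dcbi_ab_pow (n : ℕ) (hn : 1 ≤ n) :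
    Related (vAB n) (wAB n) ∧ dcbi (vAB n) (wAB n) = n / 2 ∧
    clChain (FreeGroup AB) [toFree (wAB n), (toFree (vAB n))⁻¹] = n / 2 := by
  have hpath := isCBIPath_vAB_wAB hn
  refine ⟨related_vAB_wAB n, le_antisymm (dcbi_le hpath) ?_, ?_⟩
  · have := cyclicChangeCount_le_add_four_mul_dcbi hpath
    rw [cyclicChangeCount_vAB, cyclicChangeCount_wAB hn] at this
    omega
  obtain ⟨s, l, hlen, hl⟩ := exists_commutatorProd_of_isCBIPath hpath
  refine le_antisymm ?_ (le_clChain_pair fun t₀ t₁ => ?_)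
  · calc clChain (FreeGroup AB) [toFree (wAB n), (toFree (vAB n))⁻¹]
        ≤ cl (FreeGroup AB) (1 * toFree (wAB n) * 1⁻¹ * (s * (toFree (vAB n))⁻¹ * s⁻¹)) :=
          clChain_pair_le _ _ 1 s
      _ ≤ n / 2 := hlen ▸ cl_le_length (by simpa using hl)
  · refine le_cl (exists_commutatorProd_conj_mul_conj hl t₀ t₁) fun l' hl' => ?_
    have := le_two_mul_length_add_one_of_commutatorProd_eq hl'
    omega
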